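/- Let F3 = {S_3}. Then c_k(F3) = g_k(F3) = 2k + 1 for every positive integer k. In particular, F3 is k-nice for every positive integer k. -/

import Mathlib

open SimpleGraph

/-- A monochromatic copy of `H` in `G` under the edge `k`-coloring `col`:
an injective map sending edges of `H` to edges of `G`, all of the same color. -/
def HasMonoCopy {V : Type*} {W : Type*} {k : ℕ} (G : SimpleGraph V)
    (col : Sym2 V → Fin k) (H : SimpleGraph W) : Prop :=
  ∃ (i : Fin k) (f : W ↪ V), ∀ a b : W, H.Adj a b →
    G.Adj (f a) (f b) ∧ col s(f a, f b) = i

/-- A family of graphs. -/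
abbrev GraphFam : Type 1 := Set ((W : Type) × SimpleGraph W)

/-- The coloring `col` of (the edges of) `G` contains no monochromatic copy of
any member of the family `F`. -/
def AvoidsFam {V : Type} {k : ℕ} (G : SimpleGraph V)
    (col : Sym2 V → Fin k) (F : GraphFam) : Prop :=
  ∀ H ∈ F, ¬ HasMonoCopy G col H.2

/-- The set of integers `s` such that the complete graph `K_s` admits a
`k`-coloring of its edges with no monochromatic copy of any member of `F`.
`c_k(F)` is the greatest element of this set. -/
def cSet (k : ℕ) (F : GraphFam) : Set ℕ :=
  {s | ∃ col : Sym2 (Fin s) → Fin k,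
    AvoidsFam (⊤ : SimpleGraph (Fin s)) col F}

/-- The set of integers `s` such that some finite graph `G` with chromatic number `s`
admits a `k`-coloring of its edges with no monochromatic copy of any member of `F`.
`g_k(F)` is the greatest element of this set. -/
def gSet (k : ℕ) (F : GraphFam) : Set ℕ :=
  {s | ∃ (V : Type) (_ : Fintype V) (G : SimpleGraph V)
    (col : Sym2 V → Fin k), G.chromaticNumber = (s : ℕ∞) ∧ AvoidsFam G col F}

/-- The family `F₃ = {S₃}`, where `S₃ = K_{1,3}`. -/
def F3 : GraphFam :=
  {⟨Fin 1 ⊕ Fin 3, completeBipartiteGraph (Fin 1) (Fin 3)⟩}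

/-!
Upper bound: if no vertex has three neighbours joined to it in one colour, every vertex has
degree at most `2k`, so greedy colouring uses at most `2k + 1` colours; since `K_s` has
chromatic number `s`, this bounds `c_k` as well as `g_k`. Lower bound: colour the edge `{a, b}` of
`K_{2k+1}` on `ℤ/(2k+1)` by the cyclic distance of `a` and `b`, which lies in `{1, …, k}`; each
vertex has exactly two vertices at each distance.
-/

section Greedy

variable {V : Type*} {G : SimpleGraph V} {d : ℕ}

theorem exists_coloringOn_of_forall_card_le
    (hG : ∀ v (T : Finset V), (∀ w ∈ T, G.Adj v w) → T.card ≤ d) (s : Finset V) :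
    ∃ C : V → Fin (d + 1), ∀ v ∈ s, ∀ w ∈ s, G.Adj v w → C v ≠ C w := by
  classical
  induction s using Finset.induction_on with
  | empty => exact ⟨fun _ => 0, by simp⟩
  | insert a s ha ih =>
    obtain ⟨C, hC⟩ := ih
    let N := s.filter (G.Adj a)
    obtain ⟨c, -, hc⟩ := Finset.exists_mem_notMem_of_card_lt_card
      (s := N.image C) (t := Finset.univ) <| by
        calc (N.image C).card ≤ N.card := Finset.card_image_le
          _ ≤ d := hG a N fun w hw => (Finset.mem_filter.1 hw).2
          _ < _ := by simp
    have hfree : ∀ w ∈ s, G.Adj a w → c ≠ C w := fun w hw haw hcw =>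
      hc (Finset.mem_image.2 ⟨w, Finset.mem_filter.2 ⟨hw, haw⟩, hcw.symm⟩)
    refine ⟨Function.update C a c, ?_⟩
    simp only [Finset.mem_insert]
    rintro v (rfl | hv) w (rfl | hw) hvw
    · exact absurd hvw (G.loopless.irrefl _)
    · simpa [Function.update, (hvw.ne).symm] using hfree w hw hvw
    · simpa [Function.update, hvw.ne] using (hfree v hv hvw.symm).symm
    · simpa [Function.update, ne_of_mem_of_not_mem hv ha, ne_of_mem_of_not_mem hw ha]
        using hC v hv w hw hvw

theorem colorable_succ_of_forall_card_le [Finite V]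
    (hG : ∀ v (T : Finset V), (∀ w ∈ T, G.Adj v w) → T.card ≤ d) : G.Colorable (d + 1) := by
  cases nonempty_fintype V
  obtain ⟨C, hC⟩ := exists_coloringOn_of_forall_card_le hG Finset.univ
  exact ⟨Coloring.mk C fun h => hC _ (Finset.mem_univ _) _ (Finset.mem_univ _) h⟩

end Greedy

section Star

variable {V : Type} {k : ℕ} {G : SimpleGraph V} {col : Sym2 V → Fin k}

theorem hasMonoCopy_star_iff :
    HasMonoCopy G col (completeBipartiteGraph (Fin 1) (Fin 3)) ↔
      ∃ (i : Fin k) (v : V) (w : Fin 3 ↪ V), ∀ j, G.Adj v (w j) ∧ col s(v, w j) = i := by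
  constructor
  · rintro ⟨i, f, hf⟩
    exact ⟨i, f (.inl 0), Function.Embedding.inr.trans f, fun j => hf _ _ (by simp)⟩
  · rintro ⟨i, v, w, hw⟩
    have hinj : Function.Injective (Sum.elim (fun _ : Fin 1 => v) w) :=
      Function.Injective.sumElim (fun _ _ _ => Subsingleton.elim _ _) w.injective
        fun _ j => (hw j).1.ne
    refine ⟨i, ⟨_, hinj⟩, ?_⟩
    rintro (_ | a) (_ | j) hadj
    · simp at hadj
    · exact hw j
    · exact ⟨(hw a).1.symm, Sym2.eq_swap ▸ (hw a).2⟩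
    · simp at hadj

theorem avoidsFam_F3_iff :
    AvoidsFam G col F3 ↔ ¬ HasMonoCopy G col (completeBipartiteGraph (Fin 1) (Fin 3)) := by
  simp [AvoidsFam, F3]

theorem card_le_two_of_avoidsFam_F3 (hav : AvoidsFam G col F3) (v : V) (i : Fin k)
    (T : Finset V) (hT : ∀ w ∈ T, G.Adj v w ∧ col s(v, w) = i) : T.card ≤ 2 := by
  by_contra! hT3
  obtain ⟨e⟩ := Function.Embedding.nonempty_of_card_le (α := Fin 3) (β := T) (by simpa)
  exact avoidsFam_F3_iff.1 hav <| hasMonoCopy_star_iff.2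
    ⟨i, v, e.trans (Function.Embedding.subtype _), fun j => hT _ (e j).2⟩

theorem card_le_of_avoidsFam_F3 (hav : AvoidsFam G col F3) (v : V) (T : Finset V)
    (hT : ∀ w ∈ T, G.Adj v w) : T.card ≤ 2 * k := by
  classical
  simpa using Finset.card_le_mul_card_image_of_maps_to (f := fun w => col s(v, w))
    (t := Finset.univ) (fun _ _ => Finset.mem_univ _) 2 fun i _ =>
      card_le_two_of_avoidsFam_F3 hav v i _ fun w hw => by
        simp only [Finset.mem_filter] at hw
        exact ⟨hT w hw.1, hw.2⟩

end Star

def cyclicDist (n a b : ℕ) : ℕ := min (a.dist b) (n - a.dist b)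

theorem cyclicDist_comm (n a b : ℕ) : cyclicDist n a b = cyclicDist n b a := by
  simp [cyclicDist, Nat.dist_comm]

theorem cyclicDist_le_half {n a b : ℕ} : cyclicDist n a b ≤ n / 2 := by
  unfold cyclicDist; omega

theorem false_of_cyclicDist_eq {n v a b c : ℕ} (hv : v < n) (ha : a < n) (hb : b < n)
    (hc : c < n) (hab : a ≠ b) (hac : a ≠ c) (hbc : b ≠ c)
    (hvab : cyclicDist n v a = cyclicDist n v b) (hvac : cyclicDist n v a = cyclicDist n v c) :
    False := by
  simp only [cyclicDist, Nat.dist] at hvab hvac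
  omega

theorem cyclicDist_pos {n a b : ℕ} (ha : a < n) (hb : b < n) (hab : a ≠ b) :
    0 < cyclicDist n a b := by
  unfold cyclicDist Nat.dist; omega

def cyclicDistColoring (k : ℕ) (hk : 0 < k) : Sym2 (Fin (2 * k + 1)) → Fin k :=
  Sym2.lift ⟨fun a b => ⟨cyclicDist (2 * k + 1) a b - 1,
    by have := @cyclicDist_le_half (2 * k + 1) a b; omega⟩,
    fun a b => by simp only [cyclicDist_comm]⟩

theorem avoidsFam_cyclicDistColoring {k : ℕ} (hk : 0 < k) :
    AvoidsFam ⊤ (cyclicDistColoring k hk) F3 := by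
  rw [avoidsFam_F3_iff, hasMonoCopy_star_iff]
  rintro ⟨i, v, w, hw⟩
  have hdist : ∀ j, cyclicDist (2 * k + 1) v (w j) = i + 1 := fun j => by
    have hpos := cyclicDist_pos v.2 (w j).2 (Fin.val_ne_of_ne (hw j).1.ne)
    have hcol := congrArg Fin.val (hw j).2
    simp only [cyclicDistColoring, Sym2.lift_mk] at hcol
    omega
  have hw' : ∀ j j', j ≠ j' → (w j : ℕ) ≠ w j' := fun j j' h =>
    Fin.val_ne_of_ne (w.injective.ne h)
  exact false_of_cyclicDist_eq v.2 (w 0).2 (w 1).2 (w 2).2 (hw' 0 1 (by decide))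
    (hw' 0 2 (by decide)) (hw' 1 2 (by decide)) ((hdist 0).trans (hdist 1).symm)
    ((hdist 0).trans (hdist 2).symm)

theorem mem_cSet_F3 {k : ℕ} (hk : 0 < k) : 2 * k + 1 ∈ cSet k F3 :=
  ⟨_, avoidsFam_cyclicDistColoring hk⟩

theorem cSet_subset_gSet (k : ℕ) (F : GraphFam) : cSet k F ⊆ gSet k F := fun s ⟨col, hav⟩ =>
  ⟨Fin s, inferInstance, ⊤, col, by simp [chromaticNumber_top], hav⟩

theorem le_of_mem_gSet_F3 {k s : ℕ} (hs : s ∈ gSet k F3) : s ≤ 2 * k + 1 := by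
  obtain ⟨V, _, G, col, hchi, hav⟩ := hs
  have hG : G.Colorable (2 * k + 1) :=
    colorable_succ_of_forall_card_le (card_le_of_avoidsFam_F3 hav)
  exact_mod_cast hchi ▸ hG.chromaticNumber_le

/-- `c_k(F₃) = g_k(F₃) = 2k + 1` for every positive integer `k`;
in particular `F₃` is `k`-nice for every positive integer `k`. -/
theorem stmt2 :
    ∀ k : ℕ, 0 < k →
      IsGreatest (cSet k F3) (2 * k + 1) ∧ IsGreatest (gSet k F3) (2 * k + 1) := by
  intro k hk
  have hc := mem_cSet_F3 hk
  have hub : 2 * k + 1 ∈ upperBounds (gSet k F3) := fun _ => le_of_mem_gSet_F3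
  exact ⟨⟨hc, fun s hs => hub (cSet_subset_gSet k F3 hs)⟩, ⟨cSet_subset_gSet k F3 hc, hub⟩⟩
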